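/- arXiv:1607.08758 — 4 statements merged into one kernel-verified Lean document; each statement's English description precedes it below -/
import Mathlib

section
/- For every positive integer m and every integer t ≥ −1, the sum ∑_{r ∣ m} (1/r³) · N₀(t·(m/r)²), taken over the positive divisors r of m, is positive. (This is the arithmetic content of the proof that the genus 0 reduced Gromov–Witten invariant N₀(L) of a K3 surface is nonzero for every admissible class L, via the full Yau–Zaslow formula N₀(L) = ∑_{r ∣ m(L)} (1/r³)·N₀(⟨L,L⟩/(2r²)), where L = m·L̃ with L̃ primitive and ⟨L̃,L̃⟩ = 2t.) -/
open PowerSeries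

/-- The polynomial (as a power series) `∏_{n=1}^{N} (1 - q^n)^{24}` in `ℚ[[q]]`. -/
noncomputable def yauZaslowDen (N : ℕ) : PowerSeries ℚ :=
  ∏ n ∈ Finset.Icc 1 N, (1 - (PowerSeries.X : PowerSeries ℚ) ^ n) ^ 24

/-- The genus 0 reduced Gromov–Witten invariant `N₀(ℓ)`: the coefficient of `q^{ℓ+1}`
in `∏_{n≥1} (1 - q^n)^{-24}` for `ℓ ≥ -1`, and `0` for `ℓ < -1`. -/
noncomputable def N0 (ℓ : ℤ) : ℚ :=
  if ℓ < -1 then 0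
  else PowerSeries.coeff (R := ℚ) (ℓ + 1).toNat (yauZaslowDen (ℓ + 1).toNat)⁻¹

/-!
Expanding each factor, `∏_{n ≤ N} (1 - q^n)^{-24} = ∏_{n ≤ N} (∑_{n ∣ k} q^k)^{24}` is a product of
series with nonnegative coefficients and constant term `1`, so its coefficients are nonnegative and
dominate those of the factor `1/(1 - q) = ∑ q^k`. Hence `N₀(ℓ) ≥ 0` for all `ℓ` and `N₀(ℓ) ≥ 1` for
`ℓ ≥ -1`, and the summand `r = m`, which is `N₀(t)/m³`, makes the sum positive.
-/

namespace PowerSeries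

variable {R : Type*}

def geomSeriesXPow [Semiring R] (n : ℕ) : R⟦X⟧ :=
  mk fun k => if n ∣ k then 1 else 0

@[simp]
lemma constantCoeff_geomSeriesXPow [Semiring R] (n : ℕ) :
    constantCoeff (geomSeriesXPow n : R⟦X⟧) = 1 := by
  simp [geomSeriesXPow, ← coeff_zero_eq_constantCoeff_apply]

@[simp]
lemma coeff_geomSeriesXPow_one [Semiring R] (k : ℕ) : coeff k (geomSeriesXPow 1 : R⟦X⟧) = 1 := by
  simp [geomSeriesXPow]

lemma one_sub_X_pow_mul_geomSeriesXPow [Ring R] {n : ℕ} (hn : n ≠ 0) :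
    (1 - X ^ n) * geomSeriesXPow n = (1 : R⟦X⟧) := by
  ext k
  rw [sub_mul, one_mul, map_sub, coeff_X_pow_mul', coeff_one, geomSeriesXPow, coeff_mk, coeff_mk]
  rcases Nat.eq_zero_or_pos k with rfl | hk
  · simp [hn]
  by_cases hnk : n ≤ k
  · rcases hnk.eq_or_lt with rfl | hlt
    · simp [hk.ne']
    · simp [hnk, hlt.not_ge, hk.ne']
  · have : ¬ n ∣ k := fun h => hnk (Nat.le_of_dvd hk h)
    simp [hnk, this, hk.ne']

section OrderedSemiring

variable [CommSemiring R] [PartialOrder R] [IsOrderedRing R]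

variable (R) in
def nonnegCoeffSubsemiring : Subsemiring R⟦X⟧ where
  carrier := {φ | ∀ k, 0 ≤ coeff k φ}
  mul_mem' {φ ψ} hφ hψ k := by
    rw [coeff_mul]
    exact Finset.sum_nonneg fun ij _ => mul_nonneg (hφ ij.1) (hψ ij.2)
  one_mem' k := by
    rw [coeff_one]
    split_ifs <;> simp
  add_mem' {φ ψ} hφ hψ k := by
    rw [map_add]
    exact add_nonneg (hφ k) (hψ k)
  zero_mem' k := by simp

lemma geomSeriesXPow_mem_nonnegCoeffSubsemiring (n : ℕ) :
    (geomSeriesXPow n : R⟦X⟧) ∈ nonnegCoeffSubsemiring R := fun k => by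
  rw [geomSeriesXPow, coeff_mk]
  split_ifs <;> simp

lemma coeff_mul_constantCoeff_le_coeff_mul {φ ψ : R⟦X⟧} (hφ : φ ∈ nonnegCoeffSubsemiring R)
    (hψ : ψ ∈ nonnegCoeffSubsemiring R) (k : ℕ) :
    coeff k φ * constantCoeff ψ ≤ coeff k (φ * ψ) := by
  rw [coeff_mul, ← coeff_zero_eq_constantCoeff_apply]
  exact Finset.single_le_sum (f := fun ij : ℕ × ℕ => coeff ij.1 φ * coeff ij.2 ψ)
    (fun ij _ => mul_nonneg (hφ ij.1) (hψ ij.2)) (a := (k, 0)) (by simp)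

lemma coeff_le_coeff_prod {ι : Type*} {s : Finset ι} {f : ι → R⟦X⟧}
    (hf : ∀ i ∈ s, f i ∈ nonnegCoeffSubsemiring R) (hf₀ : ∀ i ∈ s, constantCoeff (f i) = 1)
    {i : ι} (hi : i ∈ s) (k : ℕ) :
    coeff k (f i) ≤ coeff k (∏ j ∈ s, f j) := by
  classical
  have hrest : constantCoeff (∏ j ∈ s.erase i, f j) = 1 := by
    rw [map_prod]
    exact Finset.prod_eq_one fun j hj => hf₀ j (Finset.mem_of_mem_erase hj)
  have h := coeff_mul_constantCoeff_le_coeff_mul (ψ := ∏ j ∈ s.erase i, f j) (hf i hi)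
    (Subsemiring.prod_mem _ fun j hj => hf j (Finset.mem_of_mem_erase hj)) k
  rwa [hrest, mul_one, Finset.mul_prod_erase s f hi] at h

lemma coeff_le_coeff_pow {φ : R⟦X⟧} (hφ : φ ∈ nonnegCoeffSubsemiring R)
    (hφ₀ : constantCoeff φ = 1) {n : ℕ} (hn : n ≠ 0) (k : ℕ) :
    coeff k φ ≤ coeff k (φ ^ n) := by
  simpa using coeff_le_coeff_prod (s := Finset.range n) (f := fun _ => φ) (fun _ _ => hφ)
    (fun _ _ => hφ₀) (Finset.mem_range.2 (Nat.pos_of_ne_zero hn)) k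

end OrderedSemiring

end PowerSeries

lemma constantCoeff_yauZaslowDen (N : ℕ) : constantCoeff (yauZaslowDen N) = 1 := by
  rw [yauZaslowDen, map_prod]
  refine Finset.prod_eq_one fun n hn => ?_
  simp [Nat.one_le_iff_ne_zero.1 (Finset.mem_Icc.1 hn).1]

lemma inv_yauZaslowDen (N : ℕ) :
    (yauZaslowDen N)⁻¹ = ∏ n ∈ Finset.Icc 1 N, geomSeriesXPow n ^ 24 := by
  rw [PowerSeries.inv_eq_iff_mul_eq_one (by simp [constantCoeff_yauZaslowDen]), yauZaslowDen,
    ← Finset.prod_mul_distrib]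
  refine Finset.prod_eq_one fun n hn => ?_
  rw [← mul_pow, mul_comm,
    one_sub_X_pow_mul_geomSeriesXPow (Nat.one_le_iff_ne_zero.1 (Finset.mem_Icc.1 hn).1), one_pow]

lemma inv_yauZaslowDen_mem_nonnegCoeffSubsemiring (N : ℕ) :
    (yauZaslowDen N)⁻¹ ∈ nonnegCoeffSubsemiring ℚ := by
  rw [inv_yauZaslowDen]
  exact Subsemiring.prod_mem _ fun n _ => pow_mem (geomSeriesXPow_mem_nonnegCoeffSubsemiring n) 24

lemma one_le_coeff_inv_yauZaslowDen {N k : ℕ} (hk : k ≤ N) :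
    1 ≤ coeff k (yauZaslowDen N)⁻¹ := by
  rcases Nat.eq_zero_or_pos k with rfl | hk₀
  · simp [constantCoeff_yauZaslowDen]
  have hmem n : geomSeriesXPow n ^ 24 ∈ nonnegCoeffSubsemiring ℚ :=
    pow_mem (geomSeriesXPow_mem_nonnegCoeffSubsemiring n) 24
  calc (1 : ℚ) = coeff k (geomSeriesXPow 1) := (coeff_geomSeriesXPow_one k).symm
    _ ≤ coeff k (geomSeriesXPow 1 ^ 24) :=
      coeff_le_coeff_pow (geomSeriesXPow_mem_nonnegCoeffSubsemiring 1)
        (constantCoeff_geomSeriesXPow 1) (by norm_num) k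
    _ ≤ coeff k (∏ n ∈ Finset.Icc 1 N, geomSeriesXPow n ^ 24) :=
      coeff_le_coeff_prod (fun n _ => hmem n) (fun n _ => by simp)
        (Finset.mem_Icc.2 ⟨le_rfl, hk₀.trans_le hk⟩) k
    _ = coeff k (yauZaslowDen N)⁻¹ := by rw [inv_yauZaslowDen]

lemma N0_nonneg (ℓ : ℤ) : 0 ≤ N0 ℓ := by
  unfold N0
  split_ifs
  · exact le_rfl
  · exact inv_yauZaslowDen_mem_nonnegCoeffSubsemiring _ _

lemma one_le_N0 {ℓ : ℤ} (hℓ : -1 ≤ ℓ) : 1 ≤ N0 ℓ := by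
  rw [N0, if_neg hℓ.not_gt]
  exact one_le_coeff_inv_yauZaslowDen le_rfl

/-- The full Yau–Zaslow sum `∑_{r ∣ m} (1/r³) · N₀(t·(m/r)²)` is positive for every
positive integer `m` and every integer `t ≥ -1`. -/
theorem yauZaslow_sum_pos :
    ∀ m : ℕ, 0 < m → ∀ t : ℤ, -1 ≤ t →
      0 < ∑ r ∈ m.divisors, (1 / (r : ℚ) ^ 3) * N0 (t * ((m / r : ℕ) : ℤ) ^ 2) := by
  intro m hm t ht
  refine Finset.sum_pos' (fun r _ => mul_nonneg (by positivity) (N0_nonneg _))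
    ⟨m, Nat.mem_divisors_self m hm.ne', ?_⟩
  rw [Nat.div_self hm, Nat.cast_one, one_pow, mul_one]
  exact mul_pos (by positivity) (one_pos.trans_le (one_le_N0 ht))
end

section
/- For every positive integer m and every integer t ≥ 0, the sum ∑_{r ∣ m} r · N₁(t·(m/r)²), taken over the positive divisors r of m, is positive. (This is the arithmetic content of the proof that the genus 1 reduced Gromov–Witten invariant N₁(L) of a K3 surface is nonzero for every admissible class L with ⟨L,L⟩ ≥ 0, via the multiple cover formula N₁(L) = ∑_{r ∣ m(L)} r·N₁(⟨L,L⟩/(2r²)), where L = m·L̃ with L̃ primitive and ⟨L̃,L̃⟩ = 2t.) -/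
/-!
Every `N₁(ℓ)` with `ℓ ≥ 0` is already positive, so each term of the multiple cover sum is.
Indeed `∏ (1 - qⁿ)⁻²⁴` is a product of geometric series `∑ q^{nk}` and so has nonnegative
coefficients and constant term `1`, while `∑ k σ₁(k) qᵏ` has nonnegative coefficients; hence the
coefficient of `q^{ℓ+1}` of their product is at least `(ℓ + 1) σ₁(ℓ + 1) > 0`.
-/

open PowerSeries

/-- The genus 1 reduced Gromov–Witten invariant `N₁(ℓ)`: the coefficient of `q^{ℓ+1}`
in `(∑_{k≥1} k·σ₁(k)·q^k) · ∏_{n≥1} (1 - q^n)^{-24}` for `ℓ ≥ 0`, and `0` for `ℓ < 0`. -/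
noncomputable def N1 (ℓ : ℤ) : ℚ :=
  if ℓ < 0 then 0
  else PowerSeries.coeff (R := ℚ) (ℓ + 1).toNat
    ((∑ k ∈ Finset.Icc 1 (ℓ + 1).toNat,
        PowerSeries.C (R := ℚ) ((k : ℚ) * (ArithmeticFunction.sigma 1 k : ℚ)) * (PowerSeries.X : PowerSeries ℚ) ^ k)
      * (yauZaslowDen (ℓ + 1).toNat)⁻¹)

namespace PowerSeries

section NonnegCoeffs

variable (R : Type*) [Semiring R] [PartialOrder R] [IsOrderedRing R]

def nonnegCoeffs : Subsemiring R⟦X⟧ where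
  carrier := {φ | ∀ n, 0 ≤ coeff n φ}
  mul_mem' {φ ψ} hφ hψ n := by
    rw [coeff_mul]
    exact Finset.sum_nonneg fun p _ => mul_nonneg (hφ p.1) (hψ p.2)
  one_mem' n := by
    rw [coeff_one]
    split_ifs <;> simp
  add_mem' hφ hψ n := by
    rw [map_add]
    exact add_nonneg (hφ n) (hψ n)
  zero_mem' n := by simp

variable {R}

theorem C_mem_nonnegCoeffs {a : R} (ha : 0 ≤ a) : C a ∈ nonnegCoeffs R := fun n => by
  rw [coeff_C]
  split_ifs <;> simp [ha]

theorem X_mem_nonnegCoeffs : (X : R⟦X⟧) ∈ nonnegCoeffs R := fun n => by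
  rw [coeff_X]
  split_ifs <;> simp

theorem coeff_mul_coeff_le_coeff_add_mul {φ ψ : R⟦X⟧} (hφ : φ ∈ nonnegCoeffs R)
    (hψ : ψ ∈ nonnegCoeffs R) (i j : ℕ) :
    coeff i φ * coeff j ψ ≤ coeff (i + j) (φ * ψ) := by
  rw [coeff_mul]
  exact Finset.single_le_sum (f := fun p => coeff p.1 φ * coeff p.2 ψ) (a := (i, j))
    (fun p _ => mul_nonneg (hφ p.1) (hψ p.2)) (Finset.HasAntidiagonal.mem_antidiagonal.mpr rfl)

end NonnegCoeffs

theorem expand_mk_one_mem_nonnegCoeffs {R : Type*} [CommRing R] [PartialOrder R]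
    [IsOrderedRing R] (n : ℕ) (hn : n ≠ 0) : expand n hn (mk 1) ∈ nonnegCoeffs R := fun i => by
  rw [coeff_expand]
  split_ifs <;> simp

section Field

variable {k : Type*} [Field k]

theorem inv_one_sub_X_pow {n : ℕ} (hn : n ≠ 0) :
    (1 - X ^ n : k⟦X⟧)⁻¹ = expand n hn (mk 1) := by
  rw [inv_eq_iff_mul_eq_one (by simp [hn]), ← expand_X n hn, ← map_one (expand n hn),
    ← map_sub, ← map_mul, mk_one_mul_one_sub_eq_one, map_one]

/-- `k⟦X⟧` is not a `DivisionMonoid` (`X⁻¹ = 0`), but inversion on it is still multiplicative. -/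
noncomputable def invMonoidHom : k⟦X⟧ →* k⟦X⟧ where
  toFun φ := φ⁻¹
  map_one' := inv_one
  map_mul' φ ψ := by rw [PowerSeries.mul_inv_rev, mul_comm]

theorem invMonoidHom_apply (φ : k⟦X⟧) : invMonoidHom φ = φ⁻¹ := rfl

theorem inv_prod_one_sub_X_pow_pow_mem_nonnegCoeffs [PartialOrder k] [IsOrderedRing k]
    {s : Finset ℕ} (hs : 0 ∉ s) (e : ℕ → ℕ) :
    (∏ n ∈ s, (1 - X ^ n : k⟦X⟧) ^ e n)⁻¹ ∈ nonnegCoeffs k := by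
  rw [← invMonoidHom_apply, map_prod]
  refine Subsemiring.prod_mem _ fun n hn => ?_
  rw [map_pow, invMonoidHom_apply, inv_one_sub_X_pow (ne_of_mem_of_not_mem hn hs)]
  exact pow_mem (expand_mk_one_mem_nonnegCoeffs n _) _

end Field

theorem constantCoeff_prod_one_sub_X_pow_pow {R : Type*} [CommRing R] {s : Finset ℕ}
    (hs : 0 ∉ s) (e : ℕ → ℕ) : constantCoeff (∏ n ∈ s, (1 - X ^ n : R⟦X⟧) ^ e n) = 1 := by
  rw [map_prod]
  exact Finset.prod_eq_one fun n hn => by simp [ne_of_mem_of_not_mem hn hs]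

end PowerSeries

theorem N1_pos {ℓ : ℤ} (hℓ : 0 ≤ ℓ) : 0 < N1 ℓ := by
  rw [N1, if_neg (not_lt.mpr hℓ)]
  set N := (ℓ + 1).toNat
  have hN : N ≠ 0 := by omega
  set S : ℚ⟦X⟧ := ∑ k ∈ Finset.Icc 1 N,
    C ((k : ℚ) * (ArithmeticFunction.sigma 1 k : ℚ)) * X ^ k
  have hS : S ∈ nonnegCoeffs ℚ :=
    sum_mem fun k _ =>
      mul_mem (C_mem_nonnegCoeffs (by positivity)) (pow_mem X_mem_nonnegCoeffs k)
  have hSN : coeff N S = N * ArithmeticFunction.sigma 1 N := by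
    simp only [S, map_sum, coeff_C_mul, coeff_X_pow, mul_ite, mul_one, mul_zero]
    rw [Finset.sum_ite_eq, if_pos (Finset.mem_Icc.mpr ⟨Nat.one_le_iff_ne_zero.mpr hN, le_rfl⟩)]
  have hN0 : 0 ∉ Finset.Icc 1 N := by simp
  have hinv : (yauZaslowDen N)⁻¹ ∈ nonnegCoeffs ℚ :=
    inv_prod_one_sub_X_pow_pow_mem_nonnegCoeffs hN0 _
  have hinv0 : coeff 0 (yauZaslowDen N)⁻¹ = 1 := by
    rw [coeff_zero_eq_constantCoeff_apply, constantCoeff_inv, yauZaslowDen,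
      constantCoeff_prod_one_sub_X_pow_pow hN0, inv_one]
  calc 0 < coeff N S * coeff 0 (yauZaslowDen N)⁻¹ := by
        rw [hSN, hinv0, mul_one]
        have := ArithmeticFunction.sigma_pos 1 N hN
        positivity
    _ ≤ coeff (N + 0) (S * (yauZaslowDen N)⁻¹) := coeff_mul_coeff_le_coeff_add_mul hS hinv N 0

/-- The genus 1 multiple cover sum `∑_{r ∣ m} r · N₁(t·(m/r)²)` is positive for every
positive integer `m` and every integer `t ≥ 0`. -/
theorem multipleCover_sum_pos :
    ∀ m : ℕ, 0 < m → ∀ t : ℤ, 0 ≤ t →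
      0 < ∑ r ∈ m.divisors, (r : ℚ) * N1 (t * ((m / r : ℕ) : ℤ) ^ 2) := by
  intro m hm t ht
  refine Finset.sum_pos (fun r hr => ?_) ⟨m, Nat.mem_divisors_self m hm.ne'⟩
  have := Nat.pos_of_mem_divisors hr
  have := N1_pos (mul_nonneg ht (sq_nonneg ((m / r : ℕ) : ℤ)))
  positivity
end

section
/- Let n₀, n₁, s be positive rational numbers. The 4×3 matrix with rows (−2, 2s, 0), (24n₁, (1/2)n₀s³, 36n₁s), (288n₁, −12n₁s + (1/2)n₀s³, 288n₁s), (0, 528n₁ + (1/2)n₀s², 6336n₁) has rank 3 (maximal rank). -/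
open Matrix

theorem Matrix.rank_eq_card_width_of_det_submatrix_ne_zero {m n R : Type*} [Fintype n]
    [DecidableEq n] [CommRing R] [IsDomain R] (A : Matrix m n R) (r : n → m)
    (h : (A.submatrix r id).det ≠ 0) : A.rank = Fintype.card n :=
  le_antisymm A.rank_le_card_width <|
    (rank_of_det_ne_zero h).symm.le.trans (A.rank_submatrix_le r id)

/-- The 4×3 coefficient matrix of Case A of the codimension 1 analysis (in the
unknowns `κ_{[L³;0]}`, `κ_{[L;1]}`, `Z(L)`) has maximal rank 3, whenever
`n₀ = N₀(L)`, `n₁ = N₁(L)` and `s = ⟨L,L⟩` are positive. -/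
theorem caseA_matrix_rank (n₀ n₁ s : ℚ) (hn₀ : 0 < n₀) (hn₁ : 0 < n₁) (hs : 0 < s) :
    Matrix.rank
      !![-2, 2 * s, 0;
         24 * n₁, (1 / 2) * n₀ * s ^ 3, 36 * n₁ * s;
         288 * n₁, -12 * n₁ * s + (1 / 2) * n₀ * s ^ 3, 288 * n₁ * s;
         0, 528 * n₁ + (1 / 2) * n₀ * s ^ 2, 6336 * n₁] = 3 := by
  refine (rank_eq_card_width_of_det_submatrix_ne_zero _ ![0, 1, 3] ?_).trans (Fintype.card_fin 3)
  have hminor_pos : 0 < (6300 * n₀ * s ^ 2 + 266112 * n₁) * n₁ * s := by positivity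
  convert neg_ne_zero.mpr hminor_pos.ne' using 1
  simp only [det_fin_three, submatrix_apply, id_eq, of_apply, cons_val', cons_val_zero,
    cons_val_one, cons_val, cons_val_fin_one]
  ring
end

section
/- Let n₀, n₁, h be positive rational numbers. The determinant of the 4×4 matrix with rows (−2, 2h, 0, 0), (24n₁, (1/2)n₀h³, 36n₁h, n₀h³), (288n₁, −12n₁h + (1/2)n₀h³, 288n₁h, n₀h³), (0, 528n₁ + (1/2)n₀h², 6336n₁, n₀h²) is nonzero. -/
theorem det_lambdaMatrix {K : Type*} [Field K] (n₀ n₁ h : K) :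
    Matrix.det
      !![-2, 2 * h, 0, 0;
         24 * n₁, (1 / 2) * n₀ * h ^ 3, 36 * n₁ * h, n₀ * h ^ 3;
         288 * n₁, -12 * n₁ * h + (1 / 2) * n₀ * h ^ 3, 288 * n₁ * h, n₀ * h ^ 3;
         0, 528 * n₁ + (1 / 2) * n₀ * h ^ 2, 6336 * n₁, n₀ * h ^ 2] =
      -2921184 * n₀ * n₁ ^ 2 * h ^ 4 := by
  rw [Matrix.det_succ_row_zero]
  simp [Fin.sum_univ_succ, Fin.succAbove, Matrix.det_fin_three]
  ring

/-- The 4×4 coefficient matrix (in the unknowns `κ_{[H³;0]}`, `κ_{[H;1]}`, `Z(H)`, `λ`)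
obtained by exporting WDVV and Getzler relations for `Λ = (2ℓ)`, `L = H`, has nonzero
determinant whenever `n₀ = N₀(ℓ)`, `n₁ = N₁(ℓ)` and `h = 2ℓ` are positive. -/
theorem lambda_matrix_det_ne_zero (n₀ n₁ h : ℚ) (hn₀ : 0 < n₀) (hn₁ : 0 < n₁) (hh : 0 < h) :
    Matrix.det
      !![-2, 2 * h, 0, 0;
         24 * n₁, (1 / 2) * n₀ * h ^ 3, 36 * n₁ * h, n₀ * h ^ 3;
         288 * n₁, -12 * n₁ * h + (1 / 2) * n₀ * h ^ 3, 288 * n₁ * h, n₀ * h ^ 3;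
         0, 528 * n₁ + (1 / 2) * n₀ * h ^ 2, 6336 * n₁, n₀ * h ^ 2] ≠ 0 := by
  rw [det_lambdaMatrix]
  simp [hn₀.ne', hn₁.ne', hh.ne']
end
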